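/- arXiv:2007.07414 — 2 statements merged into one kernel-verified Lean document; each statement's English description precedes it below -/
import Mathlib

section
/- Let P be a closed subset of L_M(k_1,...,k_m) with index Ind_P (satisfying Ind_P ≥ 0 and Σ_{e≤a} Ind_P(e) = |a|). Define a possibly-negative index Ind_E on a multiset version of P (elements counted with multiplicity) by Ind_E(s) = |s| - Σ_{e<s, Ind_E(e)≥0} Ind_E(e), summing with multiplicity. If some element s satisfies Ind_E(s) < 0, then some tuple below the top occurs with multiplicity at least 2. -/
attribute [local instance] Classical.propDecidable

/-- Let L be a closed subset of the lattice of bounded tuples with a non-negative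
index Ind_P summing to |a| below each a ∈ L, and let Ind_E be the
multiplicity-weighted recursion. If some element has negative Ind_E, then some
tuple below the top occurs with multiplicity at least 2. -/
theorem stmt18 (m : ℕ) (k : Fin m → ℕ) (L : Finset (Fin m → ℕ))
    (hLk : ∀ r ∈ L, r ≤ k) (hkL : k ∈ L)
    (hmeet : ∀ r ∈ L, ∀ s ∈ L, r ⊓ s ∈ L)
    (IndP : (Fin m → ℕ) → ℤ) (hpos : ∀ s ∈ L, 0 ≤ IndP s)
    (hsum : ∀ a ∈ L, ∑ s ∈ L.filter (fun s => s ≤ a), IndP s = ∑ i, (a i : ℤ))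
    (μ : (Fin m → ℕ) → ℕ) (hμ : ∀ e ∈ L, 1 ≤ μ e)
    (IndE : (Fin m → ℕ) → ℤ)
    (hIndE : ∀ s ∈ L, IndE s = (∑ i, (s i : ℤ)) -
      ∑ e ∈ L.filter (fun e => e < s ∧ 0 ≤ IndE e), (μ e : ℤ) * IndE e)
    (hneg : ∃ s ∈ L, IndE s < 0) :
    ∃ e ∈ L, e < k ∧ 2 ≤ μ e := by
  by_contra hcon
  push_neg at hcon
  have hμ1 : ∀ e ∈ L, e < k → μ e = 1 := by
    intro e he hek
    have := hcon e he hek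
    have := hμ e he
    omega
  have hsumlt : ∀ e s : Fin m → ℕ, e < s → (∑ i, (e i : ℤ)) < ∑ i, (s i : ℤ) := by
    intro e s hes
    rw [Pi.lt_def] at hes
    obtain ⟨hle, i, hi⟩ := hes
    exact Finset.sum_lt_sum (fun j _ => by exact_mod_cast hle j)
      ⟨i, Finset.mem_univ i, by exact_mod_cast hi⟩
  have key : ∀ n : ℕ, ∀ s ∈ L, (∑ i, s i) = n → IndE s = IndP s := by
    intro n
    induction n using Nat.strong_induction_on with
    | _ n ih =>
      intro s hs hn
      have hEq : ∀ e ∈ L, e < s → IndE e = IndP e := by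
        intro e he hes
        refine ih (∑ i, e i) ?_ e he rfl
        have := hsumlt e s hes
        have h1 : ((∑ i, e i : ℕ) : ℤ) < ((∑ i, s i : ℕ) : ℤ) := by
          push_cast; exact this
        omega
      have hfilter : L.filter (fun e => e < s ∧ 0 ≤ IndE e)
          = L.filter (fun e => e < s) := by
        apply Finset.filter_congr
        intro e he
        constructor
        · rintro ⟨h1, _⟩; exact h1
        · intro h1
          refine ⟨h1, ?_⟩
          rw [hEq e he h1]
          exact hpos e he
      have hμeq : ∑ e ∈ L.filter (fun e => e < s), (μ e : ℤ) * IndE e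
          = ∑ e ∈ L.filter (fun e => e < s), IndP e := by
        apply Finset.sum_congr rfl
        intro e he
        rw [Finset.mem_filter] at he
        obtain ⟨heL, hes⟩ := he
        rw [hμ1 e heL (lt_of_lt_of_le hes (hLk s hs)), hEq e heL hes]
        push_cast; ring
      have hins : L.filter (fun e => e ≤ s) = insert s (L.filter (fun e => e < s)) := by
        ext e
        simp only [Finset.mem_filter, Finset.mem_insert]
        constructor
        · rintro ⟨heL, hle⟩
          rcases lt_or_eq_of_le hle with h | h
          · exact Or.inr ⟨heL, h⟩
          · exact Or.inl h
        · rintro (rfl | ⟨heL, hlt⟩)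
          · exact ⟨hs, le_refl _⟩
          · exact ⟨heL, le_of_lt hlt⟩
      have h2 : ∑ e ∈ L.filter (fun e => e ≤ s), IndP e
          = IndP s + ∑ e ∈ L.filter (fun e => e < s), IndP e := by
        rw [hins, Finset.sum_insert (by simp [lt_irrefl])]
      have h3 := hsum s hs
      rw [hIndE s hs, hfilter, hμeq]
      linarith
  obtain ⟨s, hs, hneg⟩ := hneg
  have := key (∑ i, s i) s hs rfl
  have := hpos s hs
  linarith
end

section
/- In the lattice L_M(k_1,...,k_m), for elements r < s with s an immediate follower of r, and r, r_2,...,r_j the immediate leaders of s, each meet r ∧ r_i (i = 2,...,j) is strictly below r, and moreover |s| - |r ∨ r_2 ∨ ⋯ ∨ r_j| + |r| - |t_1 ∨ ⋯ ∨ t_l ∨ (r∧r_2) ∨ ⋯ ∨ (r∧r_j)| = |s| - |t_1 ∨ ⋯ ∨ t_l ∨ r_2 ∨ ⋯ ∨ r_j|, where t_1,...,t_l together with (r∧r_2),...,(r∧r_j) are the immediate leaders of r. -/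
/-- For r ⋖ s in the lattice of bounded tuples, with r, r₂, …, r_j the immediate
leaders of s, each meet r ⊓ rᵢ is strictly below r, and the index identity
|s| - |r ∨ r₂ ∨ ⋯| + |r| - |t₁ ∨ ⋯ ∨ t_l ∨ (r⊓r₂) ∨ ⋯| = |s| - |t₁ ∨ ⋯ ∨ t_l ∨ r₂ ∨ ⋯|
holds, where the tᵢ together with the r ⊓ rᵢ are the immediate leaders of r. -/
theorem stmt19 (m : ℕ) (k r s : Fin m → ℕ) (hsk : s ≤ k) (hrs : r ⋖ s)
    (R₂ T : Finset (Fin m → ℕ)) (hrR₂ : r ∉ R₂)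
    (hcovs : ∀ x : Fin m → ℕ, x ⋖ s ↔ x ∈ insert r R₂)
    (hcovr : ∀ x : Fin m → ℕ, x ⋖ r ↔ (x ∈ T ∨ ∃ ri ∈ R₂, x = r ⊓ ri))
    (hT : ∀ t ∈ T, r ⊔ t = r ∧ r ⊓ t = t) :
    (∀ ri ∈ R₂, r ⊓ ri < r) ∧
    (((∑ i, (s i : ℤ)) - (∑ i, (((insert r R₂).sup id) i : ℤ)))
        + ((∑ i, (r i : ℤ)) - (∑ i, (((T ∪ R₂.image (fun x => r ⊓ x)).sup id) i : ℤ)))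
      = (∑ i, (s i : ℤ)) - (∑ i, (((T ∪ R₂).sup id) i : ℤ))) := by
  have hri : ∀ ri ∈ R₂, r ⊓ ri < r := by
    intro ri hmem
    have hcov : ri ⋖ s := (hcovs ri).mpr (Finset.mem_insert_of_mem hmem)
    have hne : ri ≠ r := fun h => hrR₂ (h ▸ hmem)
    refine lt_of_le_of_ne inf_le_left ?_
    intro h
    have hle : r ≤ ri := inf_eq_left.mp h
    rcases hle.lt_or_eq with hlt | heq
    · exact (hrs.2 hlt hcov.1).elim
    · exact hne heq.symm
  refine ⟨hri, ?_⟩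
  set A := (T ∪ R₂).sup id with hA
  have hTle : T.sup id ≤ r := Finset.sup_le fun t ht => inf_eq_right.mp (hT t ht).2
  have h1 : (insert r R₂).sup id = r ⊔ A := by
    rw [Finset.sup_insert, hA, Finset.sup_union, ← sup_assoc, sup_eq_left.mpr hTle]; rfl
  have h2 : (T ∪ R₂.image fun x => r ⊓ x).sup id = r ⊓ A := by
    rw [hA, Finset.sup_union, Finset.sup_union, inf_sup_left,
      Finset.sup_image, inf_eq_right.mpr hTle, Finset.sup_inf_distrib_left]
    rfl
  rw [h1, h2]
  have key : (∑ i, ((r ⊔ A) i : ℤ)) + (∑ i, ((r ⊓ A) i : ℤ))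
      = (∑ i, (r i : ℤ)) + (∑ i, (A i : ℤ)) := by
    rw [← Finset.sum_add_distrib, ← Finset.sum_add_distrib]
    refine Finset.sum_congr rfl fun i _ => ?_
    have : (r ⊔ A) i + (r ⊓ A) i = r i + A i := max_add_min _ _
    exact_mod_cast this
  linarith
end
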